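/- arXiv:2602.21390 — 4 statements merged into one kernel-verified Lean document; each statement's English description precedes it below -/
import Mathlib

section
/- Under the defensive forecasting setup with EVI condition at tolerances ε_1,…,ε_T, the accumulated Hilbert-space error vector satisfies ‖M_T‖_H ≤ sqrt( Σ_{t=1}^T ‖E_{p∼D_t}[Φ(x_t,p)(z_t − p)]‖_H² + 2 Σ_{t=1}^T ε_t ). -/
open scoped BigOperators RealInnerProductSpace

/-- A finitely supported probability distribution, given by finitely many
weighted atoms. -/
structure FinDist (α : Type*) where
  n : ℕ
  w : Fin n → ℝ
  pt : Fin n → α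
  w_nonneg : ∀ i, 0 ≤ w i
  w_sum : ∑ i, w i = 1

namespace FinDist

/-- Expectation of a vector-valued function under a finitely supported
probability distribution. -/
noncomputable def exp {α V : Type*} [AddCommMonoid V] [Module ℝ V]
    (D : FinDist α) (f : α → V) : V :=
  ∑ i, D.w i • f (D.pt i)

/-- The support of a finitely supported probability distribution. -/
def support {α : Type*} (D : FinDist α) : Set α :=
  {a | ∃ i, D.w i ≠ 0 ∧ D.pt i = a}

end FinDist

/-!
Write `w t` for the expected error vector of round `t` and `M t = w 0 + ⋯ + w (t-1)`.
Expanding `‖M (t+1)‖² = ‖M t‖² + 2⟪M t, w t⟫ + ‖w t‖²`, and noting that `⟪M t, w t⟫` is the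
left-hand side of the EVI condition evaluated at the realised target `z' = z t`, each round adds
at most `‖w t‖² + 2 ε t` to the squared norm of the accumulated error.
-/

theorem FinDist.inner_exp_right {α E : Type*} [NormedAddCommGroup E] [InnerProductSpace ℝ E]
    (D : FinDist α) (v : E) (f : α → E) :
    ⟪v, D.exp f⟫ = D.exp (fun a => ⟪v, f a⟫) := by
  simp only [FinDist.exp, inner_sum, real_inner_smul_right, smul_eq_mul]

section PartialSums

variable {E : Type*} [NormedAddCommGroup E] [InnerProductSpace ℝ E]

theorem norm_sum_range_sq_le_of_inner_partialSum_le {w : ℕ → E} {ε : ℕ → ℝ} {T : ℕ}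
    (h : ∀ t < T, ⟪∑ τ ∈ Finset.range t, w τ, w t⟫ ≤ ε t) :
    ‖∑ t ∈ Finset.range T, w t‖ ^ 2 ≤
      ∑ t ∈ Finset.range T, ‖w t‖ ^ 2 + 2 * ∑ t ∈ Finset.range T, ε t := by
  induction T with
  | zero => simp
  | succ T ih =>
    have hT := h T T.lt_succ_self
    have ih := ih fun t ht => h t (ht.trans T.lt_succ_self)
    simp only [Finset.sum_range_succ, norm_add_sq_real]
    linarith

theorem norm_sum_range_le_sqrt_of_inner_partialSum_le {w : ℕ → E} {ε : ℕ → ℝ} {T : ℕ}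
    (h : ∀ t < T, ⟪∑ τ ∈ Finset.range t, w τ, w t⟫ ≤ ε t) :
    ‖∑ t ∈ Finset.range T, w t‖ ≤
      Real.sqrt (∑ t ∈ Finset.range T, ‖w t‖ ^ 2 + 2 * ∑ t ∈ Finset.range T, ε t) :=
  abs_norm (∑ t ∈ Finset.range T, w t) ▸
    Real.abs_le_sqrt (norm_sum_range_sq_le_of_inner_partialSum_le h)

end PartialSums

theorem stmt_0_general
    {H : Type*} [NormedAddCommGroup H] [InnerProductSpace ℝ H]
    {X : Type*} {d : ℕ}
    (Z : Set (EuclideanSpace ℝ (Fin d)))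
    (Φ : X → EuclideanSpace ℝ (Fin d) → (EuclideanSpace ℝ (Fin d) →L[ℝ] H))
    (T : ℕ)
    (x : ℕ → X) (z : ℕ → EuclideanSpace ℝ (Fin d)) (hz : ∀ t < T, z t ∈ Z)
    (D : ℕ → FinDist (EuclideanSpace ℝ (Fin d)))
    (ε : ℕ → ℝ)
    (hEVI : ∀ t < T, ∀ z' ∈ Z,
      (D t).exp (fun p =>
        (⟪(∑ τ ∈ Finset.range t, (D τ).exp (fun q => Φ (x τ) q (z τ - q))),
          Φ (x t) p (z' - p)⟫)) ≤ ε t) :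
    ‖∑ t ∈ Finset.range T, (D t).exp (fun p => Φ (x t) p (z t - p))‖ ≤
      Real.sqrt (∑ t ∈ Finset.range T,
          ‖(D t).exp (fun p => Φ (x t) p (z t - p))‖ ^ 2
        + 2 * ∑ t ∈ Finset.range T, ε t) := by
  refine norm_sum_range_le_sqrt_of_inner_partialSum_le fun t ht => ?_
  rw [FinDist.inner_exp_right]
  exact hEVI t ht (z t) (hz t ht)

/-- under the EVI condition with tolerances `ε t`, the accumulated
Hilbert-space error vector `M_T = ∑_t E_{p ∼ D_t}[Φ(x_t,p)(z_t − p)]` satisfies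
`‖M_T‖ ≤ sqrt(∑_t ‖E_{p∼D_t}[Φ(x_t,p)(z_t−p)]‖² + 2 ∑_t ε_t)`. -/
theorem stmt_0
    {H : Type*} [NormedAddCommGroup H] [InnerProductSpace ℝ H] [CompleteSpace H]
    {X : Type*} [Nonempty X] {d : ℕ} (hd : 1 ≤ d)
    (Z : Set (EuclideanSpace ℝ (Fin d))) (hZ : Z.Nonempty)
    (Φ : X → EuclideanSpace ℝ (Fin d) → (EuclideanSpace ℝ (Fin d) →L[ℝ] H))
    (T : ℕ) (hT : 1 ≤ T)
    (x : ℕ → X) (z : ℕ → EuclideanSpace ℝ (Fin d)) (hz : ∀ t < T, z t ∈ Z)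
    (D : ℕ → FinDist (EuclideanSpace ℝ (Fin d)))
    (hD : ∀ t < T, (D t).support ⊆ Z)
    (ε : ℕ → ℝ) (hε : ∀ t < T, 0 ≤ ε t)
    (hEVI : ∀ t < T, ∀ z' ∈ Z,
      (D t).exp (fun p =>
        (⟪(∑ τ ∈ Finset.range t, (D τ).exp (fun q => Φ (x τ) q (z τ - q))),
          Φ (x t) p (z' - p)⟫)) ≤ ε t) :
    ‖∑ t ∈ Finset.range T, (D t).exp (fun p => Φ (x t) p (z t - p))‖ ≤
      Real.sqrt (∑ t ∈ Finset.range T,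
          ‖(D t).exp (fun p => Φ (x t) p (z t - p))‖ ^ 2
        + 2 * ∑ t ∈ Finset.range T, ε t) :=
  stmt_0_general Z Φ T x z hz D ε hEVI
end

section
/- (Theorem 4.1, guarantee of Defensive Generation.) Let Y be a nonempty set and s : Y → Z with Z ⊆ ℝ^d satisfying ‖z − z′‖_2 ≤ D for all z, z′ ∈ Z, and suppose ‖Φ(x,p)‖_op² ≤ G for all x ∈ X, p ∈ Z. Suppose the EVI condition holds with tolerances ε_t ≤ D²G/2 for all t, where the targets are z_t := s(y_t) for realized outcomes y_1,…,y_T ∈ Y. Suppose that for each t and each p in the support of D_t, μ_{t,p} is a finitely supported probability measure on Y with E_{ỹ∼μ_{t,p}}[s(ỹ)] = p. Then for every h ∈ H, the distinguisher f(x,p,y) := ⟨h, Φ(x,p)(s(y))⟩_H satisfies OIGap_T(f) ≤ ‖h‖_H · sqrt( 2·D²·G·T ). -/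
open scoped BigOperators RealInnerProductSpace

/-!
With `w_t := E_{p∼D_t} Φ(x_t,p)(s(y_t) - p)`, the mean condition `E_{μ_{t,p}} s = p` turns the
OI gap of `f` into `⟪h, M_T⟫` with `M_T = ∑_t w_t`. In
`‖M_{t+1}‖² = ‖M_t‖² + 2⟪M_t, w_t⟫ + ‖w_t‖²` the EVI condition at `z = s(y_t)` bounds the cross
term by `2ε_t ≤ D²G`, and Jensen bounds `‖w_t‖² ≤ D²G`; so `‖M_T‖² ≤ 2D²GT`, and Cauchy–Schwarz
finishes.
-/

open Finset

namespace FinDist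

variable {α : Type*}

section Module

variable {V W : Type*} [AddCommGroup V] [Module ℝ V] [AddCommGroup W] [Module ℝ W]

lemma exp_congr (D : FinDist α) {f g : α → V} (hfg : ∀ a ∈ D.support, f a = g a) :
    D.exp f = D.exp g := by
  refine sum_congr rfl fun i _ => ?_
  rcases eq_or_ne (D.w i) 0 with h0 | h0
  · simp [h0]
  · rw [hfg _ ⟨i, h0, rfl⟩]

lemma exp_sub (D : FinDist α) (f g : α → V) :
    D.exp f - D.exp g = D.exp (fun a => f a - g a) := by
  simp [exp, smul_sub, sum_sub_distrib]

lemma map_exp {F : Type*} [FunLike F V W] [LinearMapClass F ℝ V W]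
    (D : FinDist α) (L : F) (f : α → V) :
    L (D.exp f) = D.exp (fun a => L (f a)) := by
  simp [exp, map_sum, map_smul]

end Module

lemma exp_le (D : FinDist α) {f : α → ℝ} {C : ℝ} (hf : ∀ a ∈ D.support, f a ≤ C) :
    D.exp f ≤ C :=
  calc D.exp f ≤ ∑ i, D.w i * C := by
        refine sum_le_sum fun i _ => ?_
        rcases eq_or_ne (D.w i) 0 with h0 | h0
        · simp [h0]
        · exact mul_le_mul_of_nonneg_left (hf _ ⟨i, h0, rfl⟩) (D.w_nonneg i)
    _ = C := by rw [← sum_mul, D.w_sum, one_mul]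

variable {H : Type*} [NormedAddCommGroup H] [InnerProductSpace ℝ H]

lemma inner_exp (D : FinDist α) (v : H) (f : α → H) :
    ⟪v, D.exp f⟫ = D.exp (fun a => ⟪v, f a⟫) :=
  D.map_exp (innerₛₗ ℝ v) f

lemma sq_norm_exp_le (D : FinDist α) (f : α → H) :
    ‖D.exp f‖ ^ 2 ≤ D.exp (fun a => ‖f a‖ ^ 2) :=
  (convexOn_univ_norm.pow (fun _ _ => norm_nonneg _) 2).map_sum_le
    (fun i _ => D.w_nonneg i) D.w_sum (fun _ _ => Set.mem_univ _)

end FinDist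

lemma ContinuousLinearMap.sq_norm_apply_le {E F : Type*} [SeminormedAddCommGroup E]
    [NormedSpace ℝ E] [SeminormedAddCommGroup F] [NormedSpace ℝ F] (L : E →L[ℝ] F) {v : E}
    {G r : ℝ} (hL : ‖L‖ ^ 2 ≤ G) (hv : ‖v‖ ≤ r) : ‖L v‖ ^ 2 ≤ r ^ 2 * G :=
  calc ‖L v‖ ^ 2 ≤ (‖L‖ * ‖v‖) ^ 2 := pow_le_pow_left₀ (norm_nonneg _) (L.le_opNorm v) 2
    _ = ‖v‖ ^ 2 * ‖L‖ ^ 2 := by ring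
    _ ≤ r ^ 2 * G := mul_le_mul (pow_le_pow_left₀ (norm_nonneg _) hv 2) hL (sq_nonneg _)
        (sq_nonneg _)

section DefensiveForecasting

variable {H : Type*} [NormedAddCommGroup H] [InnerProductSpace ℝ H]

lemma sq_norm_sum_range_le {w : ℕ → H} {B : ℝ} {T : ℕ}
    (hw : ∀ t < T, 2 * ⟪∑ τ ∈ range t, w τ, w t⟫ + ‖w t‖ ^ 2 ≤ B) :
    ‖∑ t ∈ range T, w t‖ ^ 2 ≤ B * T := by
  induction T with
  | zero => simp
  | succ T ih =>
    have hT := hw T T.lt_succ_self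
    rw [sum_range_succ, norm_add_sq_real, Nat.cast_succ]
    linarith [ih fun t ht => hw t (ht.trans T.lt_succ_self)]

variable {E Y : Type*} [NormedAddCommGroup E] [NormedSpace ℝ E]

lemma FinDist.exp_inner_sub_exp_exp_inner (D : FinDist E) (μ : E → FinDist Y) (s : Y → E)
    (hμ : ∀ p ∈ D.support, (μ p).exp s = p) (L : E → E →L[ℝ] H) (h : H) (z : E) :
    D.exp (fun p => ⟪h, L p z⟫) - D.exp (fun p => (μ p).exp fun y => ⟪h, L p (s y)⟫) =
      ⟪h, D.exp fun p => L p (z - p)⟫ := by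
  rw [FinDist.exp_sub, FinDist.inner_exp]
  refine D.exp_congr fun p hp => ?_
  have hmean := (μ p).map_exp ((innerₛₗ ℝ h).comp (L p).toLinearMap) s
  rw [hμ p hp] at hmean
  change ⟪h, L p p⟫ = (μ p).exp (fun y => ⟪h, L p (s y)⟫) at hmean
  rw [← hmean, map_sub, inner_sub_right]

end DefensiveForecasting

theorem stmt_3_general
    {H : Type*} [NormedAddCommGroup H] [InnerProductSpace ℝ H]
    {X : Type*} {d : ℕ}
    (Z : Set (EuclideanSpace ℝ (Fin d)))
    (Φ : X → EuclideanSpace ℝ (Fin d) → (EuclideanSpace ℝ (Fin d) →L[ℝ] H))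
    {Y : Type*} (s : Y → EuclideanSpace ℝ (Fin d))
    (hs : ∀ y', s y' ∈ Z)
    (Dm G : ℝ)
    (hDiam : ∀ z ∈ Z, ∀ z' ∈ Z, ‖z - z'‖ ≤ Dm)
    (hG : ∀ (x : X), ∀ p ∈ Z, ‖Φ x p‖ ^ 2 ≤ G)
    (T : ℕ)
    (x : ℕ → X) (y : ℕ → Y)
    (D : ℕ → FinDist (EuclideanSpace ℝ (Fin d)))
    (hD : ∀ t < T, (D t).support ⊆ Z)
    (ε : ℕ → ℝ) (hεle : ∀ t < T, ε t ≤ Dm ^ 2 * G / 2)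
    (hEVI : ∀ t < T, ∀ z' ∈ Z,
      (D t).exp (fun p =>
        (⟪(∑ τ ∈ Finset.range t, (D τ).exp (fun q => Φ (x τ) q (s (y τ) - q))),
          Φ (x t) p (z' - p)⟫)) ≤ ε t)
    (μ : ℕ → EuclideanSpace ℝ (Fin d) → FinDist Y)
    (hμ : ∀ t < T, ∀ p ∈ (D t).support, (μ t p).exp (fun y' => s y') = p)
    (h : H) :
    |(∑ t ∈ Finset.range T, (D t).exp (fun p => (⟪h, Φ (x t) p (s (y t))⟫)))
      - (∑ t ∈ Finset.range T,
          (D t).exp (fun p => (μ t p).exp (fun y' => (⟪h, Φ (x t) p (s y')⟫))))| ≤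
      ‖h‖ * Real.sqrt (2 * Dm ^ 2 * G * (T : ℝ)) := by
  set w : ℕ → H := fun t => (D t).exp (fun q => Φ (x t) q (s (y t) - q))
  have hgap : (∑ t ∈ range T, (D t).exp (fun p => ⟪h, Φ (x t) p (s (y t))⟫))
      - (∑ t ∈ range T, (D t).exp (fun p => (μ t p).exp (fun y' => ⟪h, Φ (x t) p (s y')⟫)))
      = ⟪h, ∑ t ∈ range T, w t⟫ := by
    rw [inner_sum, ← sum_sub_distrib]
    exact sum_congr rfl fun t ht =>
      (D t).exp_inner_sub_exp_exp_inner (μ t) s (hμ t (mem_range.1 ht)) (Φ (x t)) h _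
  have hw_sq : ∀ t < T, ‖w t‖ ^ 2 ≤ Dm ^ 2 * G := fun t ht =>
    ((D t).sq_norm_exp_le _).trans <| (D t).exp_le fun p hp =>
      (Φ (x t) p).sq_norm_apply_le (hG _ p (hD t ht hp)) (hDiam _ (hs _) p (hD t ht hp))
  have hM : ‖∑ t ∈ range T, w t‖ ^ 2 ≤ 2 * Dm ^ 2 * G * T := by
    refine sq_norm_sum_range_le fun t ht => ?_
    have hEVIt := hEVI t ht (s (y t)) (hs (y t))
    rw [← FinDist.inner_exp] at hEVIt
    linarith [hw_sq t ht, hεle t ht]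
  rw [hgap]
  calc |⟪h, ∑ t ∈ range T, w t⟫| ≤ ‖h‖ * ‖∑ t ∈ range T, w t‖ := abs_real_inner_le_norm _ _
    _ ≤ ‖h‖ * Real.sqrt (2 * Dm ^ 2 * G * T) :=
      mul_le_mul_of_nonneg_left (Real.le_sqrt_of_sq_le hM) (norm_nonneg h)

/-- Theorem 4.1: guarantee of the Defensive Generation algorithm.
Under the EVI condition with tolerances `ε_t ≤ D²G/2` and generating measures
matching the forecast statistics, every distinguisher
`f(x,p,y) = ⟪h, Φ(x,p)(s(y))⟫` has `OIGap_T(f) ≤ ‖h‖·sqrt(2 D² G T)`. -/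
theorem stmt_3
    {H : Type*} [NormedAddCommGroup H] [InnerProductSpace ℝ H] [CompleteSpace H]
    {X : Type*} [Nonempty X] {d : ℕ} (hd : 1 ≤ d)
    (Z : Set (EuclideanSpace ℝ (Fin d))) (hZ : Z.Nonempty)
    (Φ : X → EuclideanSpace ℝ (Fin d) → (EuclideanSpace ℝ (Fin d) →L[ℝ] H))
    {Y : Type*} [Nonempty Y] (s : Y → EuclideanSpace ℝ (Fin d))
    (hs : ∀ y', s y' ∈ Z)
    (Dm G : ℝ)
    (hDiam : ∀ z ∈ Z, ∀ z' ∈ Z, ‖z - z'‖ ≤ Dm)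
    (hG : ∀ (x : X), ∀ p ∈ Z, ‖Φ x p‖ ^ 2 ≤ G)
    (T : ℕ) (hT : 1 ≤ T)
    (x : ℕ → X) (y : ℕ → Y)
    (D : ℕ → FinDist (EuclideanSpace ℝ (Fin d)))
    (hD : ∀ t < T, (D t).support ⊆ Z)
    (ε : ℕ → ℝ) (hε : ∀ t < T, 0 ≤ ε t) (hεle : ∀ t < T, ε t ≤ Dm ^ 2 * G / 2)
    (hEVI : ∀ t < T, ∀ z' ∈ Z,
      (D t).exp (fun p =>
        (⟪(∑ τ ∈ Finset.range t, (D τ).exp (fun q => Φ (x τ) q (s (y τ) - q))),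
          Φ (x t) p (z' - p)⟫)) ≤ ε t)
    (μ : ℕ → EuclideanSpace ℝ (Fin d) → FinDist Y)
    (hμ : ∀ t < T, ∀ p ∈ (D t).support, (μ t p).exp (fun y' => s y') = p)
    (h : H) :
    |(∑ t ∈ Finset.range T, (D t).exp (fun p => (⟪h, Φ (x t) p (s (y t))⟫)))
      - (∑ t ∈ Finset.range T,
          (D t).exp (fun p => (μ t p).exp (fun y' => (⟪h, Φ (x t) p (s y')⟫))))| ≤
      ‖h‖ * Real.sqrt (2 * Dm ^ 2 * G * (T : ℝ)) :=
  stmt_3_general Z Φ s hs Dm G hDiam hG T x y D hD ε hεle hEVI μ hμ h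
end

section
/- (Example 4.4, multiclass OI with a linear kernel.) Let X = {x ∈ ℝ^r : ‖x‖_2 ≤ 1}, let H₀ = ℝ^r × ℝ^d with φ(x,p) := (x,p), and let Φ(x,p) : ℝ^d → H₀^d be θ ↦ (θ_1·φ(x,p), …, θ_d·φ(x,p)). Take Z = Δ^d, realized labels y_1,…,y_T ∈ {1,…,d} with targets z_t := e_{y_t}, and suppose the EVI condition holds with tolerances ε_t ≤ 2. Let θ_1,…,θ_d ∈ ℝ^r and θ′_1,…,θ′_d ∈ ℝ^d satisfy ‖θ_j‖_2 + ‖θ′_j‖_2 ≤ B for every j. Then | Σ_{t=1}^T E_{p∼D_t}[ (⟨x_t, θ_{y_t}⟩ + ⟨p, θ′_{y_t}⟩) − Σ_{j=1}^d p_j·(⟨x_t, θ_j⟩ + ⟨p, θ′_j⟩) ] | ≤ 4·d·B·sqrt(T). -/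
/-! Let `w_t = E_{p∼D_t}[Φ(x_t,p)(e_{y_t} − p)]` and `M_t = w_1 + ⋯ + w_t`. The EVI condition at
`z = e_{y_t}` gives `⟪M_{t−1}, w_t⟫ ≤ ε_t ≤ 2`, and `‖w_t‖ ≤ 2` because the forecasts lie in the
simplex, so `‖M_t‖² = ‖M_{t−1}‖² + 2⟪M_{t−1}, w_t⟫ + ‖w_t‖²` grows by at most `8` per step. The OI
gap is `⟪Θ, M_T⟫` for `Θ = (θ_j, θ'_j)_j`, and Cauchy–Schwarz with `‖Θ‖ ≤ √d B`,
`‖M_T‖ ≤ √(8T)` bounds it by `4 d B √T`. -/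

open scoped BigOperators RealInnerProductSpace

open Finset

theorem norm_sum_range_sq_le {E : Type*} [NormedAddCommGroup E] [InnerProductSpace ℝ E]
    (w : ℕ → E) {a b : ℝ} {T : ℕ}
    (hinner : ∀ t < T, ⟪∑ τ ∈ range t, w τ, w t⟫ ≤ a) (hnorm : ∀ t < T, ‖w t‖ ≤ b) :
    ‖∑ t ∈ range T, w t‖ ^ 2 ≤ (2 * a + b ^ 2) * T := by
  induction T with
  | zero => simp
  | succ T ih =>
    have hprev := ih (fun t ht => hinner t (ht.trans T.lt_succ_self))
      (fun t ht => hnorm t (ht.trans T.lt_succ_self))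
    rw [sum_range_succ, norm_add_sq_real]
    push_cast
    have hwT : ‖w T‖ ^ 2 ≤ b ^ 2 :=
      pow_le_pow_left₀ (norm_nonneg _) (hnorm T T.lt_succ_self) 2
    linarith [hinner T T.lt_succ_self]

namespace FinDist

variable {α : Type*} (D : FinDist α)

theorem inner_exp_s5 {E : Type*} [NormedAddCommGroup E] [InnerProductSpace ℝ E] (a : E) (f : α → E) :
    ⟪a, D.exp f⟫ = D.exp fun p => ⟪a, f p⟫ := by
  simp only [FinDist.exp, inner_sum, real_inner_smul_right, smul_eq_mul]

theorem norm_exp_le {E : Type*} [SeminormedAddCommGroup E] [NormedSpace ℝ E] (f : α → E) {C : ℝ}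
    (hC : ∀ a ∈ D.support, ‖f a‖ ≤ C) : ‖D.exp f‖ ≤ C := by
  calc ‖∑ i, D.w i • f (D.pt i)‖ ≤ ∑ i, ‖D.w i • f (D.pt i)‖ := norm_sum_le _ _
    _ ≤ ∑ i, D.w i * C := by
        refine sum_le_sum fun i _ => ?_
        rw [norm_smul, Real.norm_of_nonneg (D.w_nonneg i)]
        by_cases h : D.w i = 0
        · simp [h]
        · exact mul_le_mul_of_nonneg_left (hC _ ⟨i, h, rfl⟩) (D.w_nonneg i)
    _ = C := by rw [← sum_mul, D.w_sum, one_mul]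

end FinDist

def probSimplex (ι : Type*) [Fintype ι] : Set (EuclideanSpace ℝ ι) :=
  {p | (∀ j, 0 ≤ p j) ∧ ∑ j, p j = 1}

section Simplex

variable {ι : Type*} [Fintype ι]

theorem norm_sq_le_one_of_mem_probSimplex {p : EuclideanSpace ℝ ι} (hp : p ∈ probSimplex ι) :
    ‖p‖ ^ 2 ≤ 1 := by
  obtain ⟨hp0, hp1⟩ := hp
  rw [EuclideanSpace.norm_sq_eq, ← hp1]
  refine sum_le_sum fun j _ => ?_
  rw [Real.norm_eq_abs, sq_abs, sq]
  exact mul_le_of_le_one_left (hp0 j) (hp1 ▸ single_le_sum (fun i _ => hp0 i) (mem_univ j))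

variable [DecidableEq ι]

theorem single_mem_probSimplex (i : ι) : EuclideanSpace.single i (1 : ℝ) ∈ probSimplex ι := by
  refine ⟨fun j => ?_, ?_⟩ <;> simp [PiLp.single_apply, apply_ite]

theorem norm_single_sub_sq_le_two (i : ι) {p : EuclideanSpace ℝ ι} (hp : p ∈ probSimplex ι) :
    ‖EuclideanSpace.single i (1 : ℝ) - p‖ ^ 2 ≤ 2 := by
  rw [norm_sub_sq_real, EuclideanSpace.inner_single_left, PiLp.norm_single]
  simp only [norm_one, one_pow, map_one, one_mul]
  linarith [norm_sq_le_one_of_mem_probSimplex hp, hp.1 i]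

end Simplex

/-- The map `Φ(x,p)` of the paper is `v ↦ featureLift φ(x,p) v`. -/
noncomputable def featureLift {H : Type*} [SMul ℝ H] {d : ℕ} (h : H) (v : EuclideanSpace ℝ (Fin d)) :
    PiLp 2 fun _ : Fin d => H :=
  WithLp.toLp 2 fun j => v j • h

section FeatureLift

variable {H : Type*} [NormedAddCommGroup H] [InnerProductSpace ℝ H] {d : ℕ}

theorem norm_featureLift_sq (h : H) (v : EuclideanSpace ℝ (Fin d)) :
    ‖featureLift h v‖ ^ 2 = ‖v‖ ^ 2 * ‖h‖ ^ 2 := by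
  simp only [featureLift, PiLp.norm_sq_eq_of_L2, sum_mul, norm_smul, mul_pow]

theorem inner_featureLift (Θ : PiLp 2 fun _ : Fin d => H) (h : H) (v : EuclideanSpace ℝ (Fin d)) :
    ⟪Θ, featureLift h v⟫ = ∑ j, v j * ⟪h, Θ j⟫ := by
  simp only [featureLift, PiLp.inner_apply, real_inner_smul_right, real_inner_comm]

end FeatureLift

section LinearKernel

variable {r d : ℕ}

noncomputable def distinguisherCoeffs (θ : Fin d → EuclideanSpace ℝ (Fin r))
    (θ' : Fin d → EuclideanSpace ℝ (Fin d)) :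
    PiLp 2 fun _ : Fin d => WithLp 2 (EuclideanSpace ℝ (Fin r) × EuclideanSpace ℝ (Fin d)) :=
  WithLp.toLp 2 fun j => WithLp.toLp 2 (θ j, θ' j)

theorem norm_featureLift_single_sub_le (i : Fin d) {x : EuclideanSpace ℝ (Fin r)} (hx : ‖x‖ ≤ 1)
    {p : EuclideanSpace ℝ (Fin d)} (hp : p ∈ probSimplex (Fin d)) :
    ‖featureLift (WithLp.toLp 2 (x, p)) (EuclideanSpace.single i 1 - p)‖ ≤ 2 := by
  rw [← sq_le_sq₀ (norm_nonneg _) zero_le_two, norm_featureLift_sq, WithLp.prod_norm_sq_eq_of_L2,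
    WithLp.toLp_fst, WithLp.toLp_snd]
  have hx2 : ‖x‖ ^ 2 ≤ 1 := pow_le_one₀ (norm_nonneg _) hx
  nlinarith [norm_single_sub_sq_le_two i hp, norm_sq_le_one_of_mem_probSimplex hp]

theorem inner_distinguisherCoeffs_featureLift (θ : Fin d → EuclideanSpace ℝ (Fin r))
    (θ' : Fin d → EuclideanSpace ℝ (Fin d)) (i : Fin d) (x : EuclideanSpace ℝ (Fin r))
    (p : EuclideanSpace ℝ (Fin d)) :
    ⟪distinguisherCoeffs θ θ', featureLift (WithLp.toLp 2 (x, p)) (EuclideanSpace.single i 1 - p)⟫ =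
      (⟪x, θ i⟫ + ⟪p, θ' i⟫) - ∑ j, p j * (⟪x, θ j⟫ + ⟪p, θ' j⟫) := by
  simp only [distinguisherCoeffs, inner_featureLift, WithLp.prod_inner_apply, PiLp.sub_apply, PiLp.single_apply, sub_mul,
    sum_sub_distrib, ite_mul, one_mul, zero_mul, sum_ite_eq', mem_univ, if_true]

theorem norm_distinguisherCoeffs_sq_le (θ : Fin d → EuclideanSpace ℝ (Fin r))
    (θ' : Fin d → EuclideanSpace ℝ (Fin d)) {B : ℝ} (hB : ∀ j, ‖θ j‖ + ‖θ' j‖ ≤ B) :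
    ‖distinguisherCoeffs θ θ'‖ ^ 2 ≤ d * B ^ 2 := by
  rw [distinguisherCoeffs, PiLp.norm_sq_eq_of_L2]
  calc ∑ j, ‖WithLp.toLp 2 (θ j, θ' j)‖ ^ 2 ≤ ∑ _j : Fin d, B ^ 2 := sum_le_sum fun j _ => by
        rw [WithLp.prod_norm_sq_eq_of_L2, WithLp.toLp_fst, WithLp.toLp_snd]
        nlinarith [hB j, norm_nonneg (θ j), norm_nonneg (θ' j)]
    _ = d * B ^ 2 := by simp

end LinearKernel

theorem stmt_5_general
    {r d : ℕ}
    (T : ℕ)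
    (x : ℕ → EuclideanSpace ℝ (Fin r)) (hx : ∀ t < T, ‖x t‖ ≤ 1)
    (y : ℕ → Fin d)
    (D : ℕ → FinDist (EuclideanSpace ℝ (Fin d)))
    (hD : ∀ t < T, (D t).support ⊆ {p : EuclideanSpace ℝ (Fin d) |
        (∀ j, 0 ≤ p j) ∧ ∑ j, p j = 1})
    (ε : ℕ → ℝ) (hεle : ∀ t < T, ε t ≤ 2)
    (hEVI : ∀ t < T, ∀ z' ∈ {p : EuclideanSpace ℝ (Fin d) |
        (∀ j, 0 ≤ p j) ∧ ∑ j, p j = 1},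
      (D t).exp (fun p =>
        (⟪(∑ τ ∈ Finset.range t, (D τ).exp (fun q =>
            (WithLp.equiv 2 (∀ _ : Fin d,
                WithLp 2 (EuclideanSpace ℝ (Fin r) × EuclideanSpace ℝ (Fin d)))).symm
              (fun j => ((EuclideanSpace.single (y τ) (1 : ℝ) - q) j) •
                (WithLp.equiv 2
                  (EuclideanSpace ℝ (Fin r) × EuclideanSpace ℝ (Fin d))).symm
                  (x τ, q)))),
          (WithLp.equiv 2 (∀ _ : Fin d,
              WithLp 2 (EuclideanSpace ℝ (Fin r) × EuclideanSpace ℝ (Fin d)))).symm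
            (fun j => ((z' - p) j) •
              (WithLp.equiv 2
                (EuclideanSpace ℝ (Fin r) × EuclideanSpace ℝ (Fin d))).symm
                (x t, p))⟫)) ≤ ε t)
    (B : ℝ)
    (θ : Fin d → EuclideanSpace ℝ (Fin r)) (θ' : Fin d → EuclideanSpace ℝ (Fin d))
    (hB : ∀ j, ‖θ j‖ + ‖θ' j‖ ≤ B) :
    |∑ t ∈ Finset.range T, (D t).exp (fun p =>
        ((⟪x t, θ (y t)⟫ + ⟪p, θ' (y t)⟫)
          - ∑ j, p j * (⟪x t, θ j⟫ + ⟪p, θ' j⟫)))| ≤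
      4 * (d : ℝ) * B * Real.sqrt (T : ℝ) := by
  set w : ℕ → PiLp 2 (fun _ : Fin d =>
      WithLp 2 (EuclideanSpace ℝ (Fin r) × EuclideanSpace ℝ (Fin d))) := fun t =>
    (D t).exp fun p => featureLift (WithLp.toLp 2 (x t, p)) (EuclideanSpace.single (y t) 1 - p)
  have hw_inner : ∀ t < T, ⟪∑ τ ∈ range t, w τ, w t⟫ ≤ 2 := fun t ht => by
    rw [FinDist.inner_exp_s5]
    exact (hEVI t ht _ (single_mem_probSimplex (y t))).trans (hεle t ht)
  have hw_norm : ∀ t < T, ‖w t‖ ≤ 2 := fun t ht =>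
    FinDist.norm_exp_le _ _ fun p hp => norm_featureLift_single_sub_le _ (hx t ht) (hD t ht hp)
  have hM : ‖∑ t ∈ range T, w t‖ ^ 2 ≤ 8 * T := by
    linarith [norm_sum_range_sq_le w hw_inner hw_norm]
  have hgap : ∑ t ∈ range T, (D t).exp (fun p =>
        ((⟪x t, θ (y t)⟫ + ⟪p, θ' (y t)⟫)
          - ∑ j, p j * (⟪x t, θ j⟫ + ⟪p, θ' j⟫))) =
      ⟪distinguisherCoeffs θ θ', ∑ t ∈ range T, w t⟫ := by
    simp only [w, inner_sum, FinDist.inner_exp_s5, inner_distinguisherCoeffs_featureLift]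
  have hΘ := norm_distinguisherCoeffs_sq_le θ θ' hB
  have hB0 : 0 ≤ B := (add_nonneg (norm_nonneg _) (norm_nonneg _)).trans (hB (y 0))
  have hdd : (d : ℝ) ≤ d ^ 2 := by exact_mod_cast Nat.le_self_pow two_ne_zero d
  rw [hgap]
  refine (abs_real_inner_le_norm _ _).trans ((sq_le_sq₀ (by positivity) (by positivity)).1 ?_)
  calc (‖distinguisherCoeffs θ θ'‖ * ‖∑ t ∈ range T, w t‖) ^ 2
        = ‖distinguisherCoeffs θ θ'‖ ^ 2 * ‖∑ t ∈ range T, w t‖ ^ 2 := mul_pow _ _ 2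
    _ ≤ (d * B ^ 2) * (8 * T) := mul_le_mul hΘ hM (by positivity) (by positivity)
    _ ≤ (4 * d * B * √T) ^ 2 := by
      rw [mul_pow, Real.sq_sqrt (Nat.cast_nonneg T)]
      nlinarith [mul_nonneg (sq_nonneg B) (Nat.cast_nonneg (α := ℝ) T)]

/-- Example 4.4, multiclass OI with a linear kernel:
`X` is the unit ball of `ℝ^r`, `H₀ = ℝ^r × ℝ^d` (with the `ℓ²` product inner
product), `φ(x,p) = (x,p)`, `Z = Δ^d`, targets `e_{y_t}`, EVI tolerances
`ε_t ≤ 2`.  For coefficients with `‖θ_j‖ + ‖θ'_j‖ ≤ B`, the OI gap of the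
distinguisher `f(x,p,y) = ⟨x, θ_y⟩ + ⟨p, θ'_y⟩` is at most `4·d·B·√T`. -/
theorem stmt_5
    {r d : ℕ} (hr : 1 ≤ r) (hd : 1 ≤ d)
    (T : ℕ) (hT : 1 ≤ T)
    (x : ℕ → EuclideanSpace ℝ (Fin r)) (hx : ∀ t < T, ‖x t‖ ≤ 1)
    (y : ℕ → Fin d)
    (D : ℕ → FinDist (EuclideanSpace ℝ (Fin d)))
    (hD : ∀ t < T, (D t).support ⊆ {p : EuclideanSpace ℝ (Fin d) |
        (∀ j, 0 ≤ p j) ∧ ∑ j, p j = 1})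
    (ε : ℕ → ℝ) (hε : ∀ t < T, 0 ≤ ε t) (hεle : ∀ t < T, ε t ≤ 2)
    (hEVI : ∀ t < T, ∀ z' ∈ {p : EuclideanSpace ℝ (Fin d) |
        (∀ j, 0 ≤ p j) ∧ ∑ j, p j = 1},
      (D t).exp (fun p =>
        (⟪(∑ τ ∈ Finset.range t, (D τ).exp (fun q =>
            (WithLp.equiv 2 (∀ _ : Fin d,
                WithLp 2 (EuclideanSpace ℝ (Fin r) × EuclideanSpace ℝ (Fin d)))).symm
              (fun j => ((EuclideanSpace.single (y τ) (1 : ℝ) - q) j) •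
                (WithLp.equiv 2
                  (EuclideanSpace ℝ (Fin r) × EuclideanSpace ℝ (Fin d))).symm
                  (x τ, q)))),
          (WithLp.equiv 2 (∀ _ : Fin d,
              WithLp 2 (EuclideanSpace ℝ (Fin r) × EuclideanSpace ℝ (Fin d)))).symm
            (fun j => ((z' - p) j) •
              (WithLp.equiv 2
                (EuclideanSpace ℝ (Fin r) × EuclideanSpace ℝ (Fin d))).symm
                (x t, p))⟫)) ≤ ε t)
    (B : ℝ)
    (θ : Fin d → EuclideanSpace ℝ (Fin r)) (θ' : Fin d → EuclideanSpace ℝ (Fin d))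
    (hB : ∀ j, ‖θ j‖ + ‖θ' j‖ ≤ B) :
    |∑ t ∈ Finset.range T, (D t).exp (fun p =>
        ((⟪x t, θ (y t)⟫ + ⟪p, θ' (y t)⟫)
          - ∑ j, p j * (⟪x t, θ j⟫ + ⟪p, θ' j⟫)))| ≤
      4 * (d : ℝ) * B * Real.sqrt (T : ℝ) :=
  stmt_5_general T x hx y D hD ε hεle hEVI B θ θ' hB
end

section
/- (Equation (S), S-Lemma characterization of the moment set of the unit ball.) For d ≥ 1, the set Z := {(v,Q) ∈ ℝ^d × Sym_d(ℝ) : there exists a Borel probability measure μ on the closed unit ball {y ∈ ℝ^d : ‖y‖_2 ≤ 1} with ∫ y dμ = v and ∫ y y^⊤ dμ = Q} is equal to the set M := {(v,Q) ∈ ℝ^d × Sym_d(ℝ) : Q is positive semidefinite, Q − v v^⊤ is positive semidefinite, and Tr(Q) ≤ 1}. -/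
/-!
The moments of a probability measure on the unit ball satisfy the three conditions because
`xᵀ(Q - vvᵀ)x` is the variance of `y ↦ x ⬝ y` and `Tr Q = ∫ ‖y‖²`.
Conversely the moment set is convex and contains `(y, yyᵀ)` for every `y` in the ball (Dirac
masses). For `‖v‖ < 1` and a unit vector `u`, the line through `v` in direction `u` meets the
sphere at `v + t u` and `v - s u` with `ts = 1 - ‖v‖²`; weighting these two points by `s` and `t`
gives mean `v` and second moment `vvᵀ + (1 - ‖v‖²) uuᵀ`. Diagonalising `Q - vvᵀ = ∑ λᵢ eᵢeᵢᵀ`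
with `∑ λᵢ ≤ 1 - ‖v‖²` exhibits `(v, Q)` as a convex combination of these points and `(v, vvᵀ)`.
-/

open MeasureTheory Matrix

theorem Continuous.memLp_of_measure_compl_eq_zero {X E : Type*} [TopologicalSpace X]
    [MeasurableSpace X] [OpensMeasurableSpace X] [NormedAddCommGroup E]
    [SecondCountableTopologyEither X E] {μ : Measure X} [IsFiniteMeasure μ] {K : Set X}
    (hK : IsCompact K) (hμK : μ Kᶜ = 0) {f : X → E} (hf : Continuous f) (p : ENNReal) :
    MemLp f p μ := by
  obtain ⟨C, hC⟩ := hK.exists_bound_of_continuousOn hf.continuousOn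
  refine .of_bound hf.aestronglyMeasurable C ?_
  filter_upwards [mem_ae_iff.mpr hμK] with y hy using hC y hy

theorem integral_smul_add_smul_measure {α E : Type*} [MeasurableSpace α] [NormedAddCommGroup E]
    [NormedSpace ℝ E] {μ ν : Measure α} {f : α → E} (hμ : Integrable f μ) (hν : Integrable f ν)
    {a b : ℝ} (ha : 0 ≤ a) (hb : 0 ≤ b) :
    ∫ x, f x ∂(ENNReal.ofReal a • μ + ENNReal.ofReal b • ν) =
      a • ∫ x, f x ∂μ + b • ∫ x, f x ∂ν := by
  rw [integral_add_measure (hμ.smul_measure ENNReal.ofReal_ne_top)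
    (hν.smul_measure ENNReal.ofReal_ne_top), integral_smul_measure, integral_smul_measure,
    ENNReal.toReal_ofReal ha, ENNReal.toReal_ofReal hb]

theorem Convex.smul_add_sum_smul_mem {ι E : Type*} [AddCommGroup E] [Module ℝ E] {s : Set E}
    (hs : Convex ℝ s) {x : E} (hx : x ∈ s) {t : Finset ι} {w : ι → ℝ} {z : ι → E}
    (hw₀ : ∀ i ∈ t, 0 ≤ w i) (hw₁ : ∑ i ∈ t, w i ≤ 1) (hz : ∀ i ∈ t, z i ∈ s) :
    (1 - ∑ i ∈ t, w i) • x + ∑ i ∈ t, w i • z i ∈ s := by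
  have := hs.sum_mem (t := t.insertNone) (w := fun o => o.elim (1 - ∑ i ∈ t, w i) w)
    (z := fun o => o.elim x z) ?_ (by simp [Finset.sum_insertNone]) ?_
  · simpa [Finset.sum_insertNone] using this
  · rintro (_ | i) hi
    · simpa using hw₁
    · exact hw₀ i (by simpa using hi)
  · rintro (_ | i) hi
    · exact hx
    · exact hz i (by simpa using hi)

theorem Matrix.IsHermitian.eq_sum_eigenvalues_smul_vecMulVec {𝕜 ι : Type*} [RCLike 𝕜]
    [Fintype ι] [DecidableEq ι] {A : Matrix ι ι 𝕜} (hA : A.IsHermitian) :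
    A = ∑ i, (hA.eigenvalues i : 𝕜) •
      vecMulVec (hA.eigenvectorBasis i) (star (hA.eigenvectorBasis i : ι → 𝕜)) := by
  conv_lhs => rw [hA.spectral_theorem]
  ext j k
  simp only [Unitary.conjStarAlgAut_apply, mul_apply, diagonal_apply, Matrix.sum_apply,
    smul_apply, vecMulVec_apply]
  simp [mul_comm, mul_left_comm, mul_assoc]

theorem EuclideanSpace.dotProduct_integral {ι α : Type*} [Fintype ι] [MeasurableSpace α]
    {μ : Measure α} {f : α → EuclideanSpace ℝ ι} (hf : Integrable f μ) (x : ι → ℝ) :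
    x ⬝ᵥ (∫ a, f a ∂μ : EuclideanSpace ℝ ι) = ∫ a, x ⬝ᵥ f a ∂μ := by
  have := integral_inner (𝕜 := ℝ) hf (WithLp.toLp 2 x)
  simp_rw [EuclideanSpace.inner_eq_star_dotProduct, star_trivial] at this
  simp_rw [dotProduct_comm x]
  exact this.symm

namespace UnitBallMoments

variable {ι : Type*}

noncomputable def secondMoment (μ : Measure (EuclideanSpace ℝ ι)) : Matrix ι ι ℝ :=
  Matrix.of fun i j => ∫ y, y i * y j ∂μ

theorem isHermitian_secondMoment (μ : Measure (EuclideanSpace ℝ ι)) :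
    (secondMoment μ).IsHermitian :=
  IsHermitian.ext fun i j => by simp only [secondMoment, of_apply, star_trivial, mul_comm]

variable [Fintype ι]

def ballMomentSet (ι : Type*) [Fintype ι] : Set (EuclideanSpace ℝ ι × Matrix ι ι ℝ) :=
  {p | ∃ μ : Measure (EuclideanSpace ℝ ι), IsProbabilityMeasure μ ∧
    μ {y : EuclideanSpace ℝ ι | ‖y‖ ≤ 1}ᶜ = 0 ∧ p.1 = (∫ y, y ∂μ) ∧ p.2 = secondMoment μ}

theorem isCompact_norm_le_one : IsCompact {y : EuclideanSpace ℝ ι | ‖y‖ ≤ 1} := by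
  simpa [Metric.closedBall] using isCompact_closedBall (0 : EuclideanSpace ℝ ι) 1

section SupportedOnBall

variable {μ : Measure (EuclideanSpace ℝ ι)} (hμ : μ {y : EuclideanSpace ℝ ι | ‖y‖ ≤ 1}ᶜ = 0)
include hμ

theorem integrable_of_continuous [IsFiniteMeasure μ] {E : Type*} [NormedAddCommGroup E]
    {f : EuclideanSpace ℝ ι → E} (hf : Continuous f) : Integrable f μ :=
  memLp_one_iff_integrable.mp (hf.memLp_of_measure_compl_eq_zero isCompact_norm_le_one hμ 1)

theorem dotProduct_secondMoment_mulVec [IsFiniteMeasure μ] (x : ι → ℝ) :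
    star x ⬝ᵥ (secondMoment μ *ᵥ x) = ∫ y, (x ⬝ᵥ y) ^ 2 ∂μ := by
  have hint : ∀ j k, Integrable (fun y : EuclideanSpace ℝ ι => x j * x k * (y j * y k)) μ :=
    fun j k => integrable_of_continuous hμ (by fun_prop)
  have hsq : ∀ y : EuclideanSpace ℝ ι, (x ⬝ᵥ y) ^ 2 = ∑ j, ∑ k, x j * x k * (y j * y k) := by
    intro y
    simp only [dotProduct, sq, Finset.sum_mul_sum]
    exact Finset.sum_congr rfl fun j _ => Finset.sum_congr rfl fun k _ => by ring
  simp_rw [hsq]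
  rw [integral_finsetSum _ fun j _ => integrable_finsetSum _ fun k _ => hint j k]
  simp_rw [integral_finsetSum _ fun k _ => hint _ k, integral_const_mul]
  simp only [secondMoment, dotProduct, mulVec, star_trivial, of_apply, Finset.mul_sum]
  exact Finset.sum_congr rfl fun j _ => Finset.sum_congr rfl fun k _ => by ring

variable [IsProbabilityMeasure μ]

theorem posSemidef_secondMoment_sub_vecMulVec :
    (secondMoment μ - vecMulVec (∫ y, y ∂μ : EuclideanSpace ℝ ι)
      (∫ y, y ∂μ : EuclideanSpace ℝ ι)).PosSemidef := by
  refine .of_dotProduct_mulVec_nonneg ((isHermitian_secondMoment μ).sub ?_) fun x => ?_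
  · simpa using (posSemidef_vecMulVec_self_star
      (WithLp.ofLp (∫ y, y ∂μ : EuclideanSpace ℝ ι))).isHermitian
  rw [sub_mulVec, dotProduct_sub, dotProduct_secondMoment_mulVec hμ, vecMulVec_mulVec]
  simp only [star_trivial, MulOpposite.smul_eq_mul_unop, MulOpposite.unop_op, dotProduct_smul,
    sub_nonneg]
  rw [dotProduct_comm _ x, ← sq, EuclideanSpace.dotProduct_integral (f := fun y => y)
    (integrable_of_continuous hμ continuous_id)]
  have hx : Continuous fun y : EuclideanSpace ℝ ι => x ⬝ᵥ y := by fun_prop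
  have hvar := ProbabilityTheory.variance_eq_sub
    (hx.memLp_of_measure_compl_eq_zero isCompact_norm_le_one hμ 2)
  simp only [Pi.pow_apply] at hvar
  linarith [ProbabilityTheory.variance_nonneg (fun y : EuclideanSpace ℝ ι => x ⬝ᵥ y) μ]

theorem trace_secondMoment_le_one : (secondMoment μ).trace ≤ 1 := by
  have hint : ∀ i, Integrable (fun y : EuclideanSpace ℝ ι => y i ^ 2) μ :=
    fun i => integrable_of_continuous hμ (by fun_prop)
  calc (secondMoment μ).trace = ∫ y, ‖y‖ ^ 2 ∂μ := by
        simp_rw [EuclideanSpace.real_norm_sq_eq, integral_finsetSum _ fun i _ => hint i]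
        simp [trace, secondMoment, sq]
    _ ≤ ∫ _, 1 ∂μ := by
        refine integral_mono_ae (integrable_of_continuous hμ (by fun_prop))
          (integrable_const _) ?_
        filter_upwards [mem_ae_iff.mpr hμ] with y hy
        exact pow_le_one₀ (norm_nonneg y) hy
    _ = 1 := by simp

end SupportedOnBall

theorem convex_ballMomentSet : Convex ℝ (ballMomentSet ι) := by
  rintro ⟨_, _⟩ ⟨μ, hμ, hμ₁, rfl, rfl⟩ ⟨_, _⟩ ⟨ν, hν, hν₁, rfl, rfl⟩ a b ha hb hab
  refine ⟨ENNReal.ofReal a • μ + ENNReal.ofReal b • ν, ⟨?_⟩, ?_, ?_, ?_⟩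
  · simp [← ENNReal.ofReal_add ha hb, hab]
  · simp [hμ₁, hν₁]
  · exact (integral_smul_add_smul_measure (integrable_of_continuous hμ₁ continuous_id)
      (integrable_of_continuous hν₁ continuous_id) ha hb).symm
  · ext i j
    have hf : Continuous fun y : EuclideanSpace ℝ ι => y i * y j := by fun_prop
    simp [secondMoment, integral_smul_add_smul_measure (integrable_of_continuous hμ₁ hf)
      (integrable_of_continuous hν₁ hf) ha hb]

theorem pair_mem_ballMomentSet {y : EuclideanSpace ℝ ι} (hy : ‖y‖ ≤ 1) :
    (y, vecMulVec y y) ∈ ballMomentSet ι := by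
  refine ⟨Measure.dirac y, inferInstance, ?_, by simp, ?_⟩
  · simp [isCompact_norm_le_one.isClosed.measurableSet.compl, hy]
  · ext i j
    simp [secondMoment, vecMulVec_apply]

theorem mem_ballMomentSet_of_norm_lt_one {v u : EuclideanSpace ℝ ι} (hv : ‖v‖ < 1)
    (hu : ‖u‖ = 1) : (v, vecMulVec v v + (1 - ‖v‖ ^ 2) • vecMulVec u u) ∈ ballMomentSet ι := by
  set b := inner ℝ v u
  set c := 1 - ‖v‖ ^ 2
  have hc : 0 < c := by nlinarith [norm_nonneg v]
  set D := √(b ^ 2 + c)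
  have hD : 0 < D := Real.sqrt_pos.mpr (by positivity)
  have hD2 : D ^ 2 = b ^ 2 + c := Real.sq_sqrt (by positivity)
  obtain ⟨hb₁, hb₂⟩ := abs_le.mp (Real.abs_le_sqrt (le_add_of_nonneg_right hc.le) : |b| ≤ D)
  -- `D - b` and `-(D + b)` are the roots of `‖v + t • u‖ ^ 2 - 1 = t ^ 2 + 2 b t - c`.
  have h₁ : ‖v + (D - b) • u‖ = 1 := by
    refine (pow_eq_one_iff_of_nonneg (norm_nonneg _) two_ne_zero).mp ?_
    rw [norm_add_sq_real, inner_smul_right, norm_smul, mul_pow, hu, Real.norm_eq_abs, sq_abs]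
    linear_combination hD2
  have h₂ : ‖v - (D + b) • u‖ = 1 := by
    refine (pow_eq_one_iff_of_nonneg (norm_nonneg _) two_ne_zero).mp ?_
    rw [norm_sub_sq_real, inner_smul_right, norm_smul, mul_pow, hu, Real.norm_eq_abs, sq_abs]
    linear_combination hD2
  have hmix := convex_ballMomentSet (pair_mem_ballMomentSet h₁.le) (pair_mem_ballMomentSet h₂.le)
    (div_nonneg (by linarith) (by positivity) : 0 ≤ (D + b) / (2 * D))
    (div_nonneg (by linarith) (by positivity) : 0 ≤ (D - b) / (2 * D)) (by field_simp; ring)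
  convert hmix using 1
  refine Prod.ext ?_ ?_
  · ext j
    simp only [WithLp.ofLp_add, WithLp.ofLp_smul, Prod.smul_mk, smul_add, WithLp.ofLp_sub,
      Prod.mk_add_mk, PiLp.add_apply, PiLp.smul_apply, smul_eq_mul, PiLp.sub_apply]
    field_simp
    ring
  · ext j k
    simp only [Matrix.add_apply, vecMulVec_apply, Matrix.smul_apply, smul_eq_mul,
      WithLp.ofLp_add, WithLp.ofLp_smul, Prod.smul_mk, smul_add, WithLp.ofLp_sub, Prod.mk_add_mk,
      Pi.add_apply, Pi.smul_apply, Pi.sub_apply]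
    field_simp
    linear_combination (-2 * u j * u k * D) * hD2

theorem mem_ballMomentSet_vecMulVec_add_sum {κ : Type*} {v : EuclideanSpace ℝ ι} (hv : ‖v‖ < 1)
    {s : Finset κ} {w : κ → ℝ} {u : κ → EuclideanSpace ℝ ι} (hw₀ : ∀ i ∈ s, 0 ≤ w i)
    (hw : ∑ i ∈ s, w i ≤ 1 - ‖v‖ ^ 2) (hu : ∀ i ∈ s, ‖u i‖ = 1) :
    (v, vecMulVec v v + ∑ i ∈ s, w i • vecMulVec (u i) (u i)) ∈ ballMomentSet ι := by
  set c := 1 - ‖v‖ ^ 2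
  have hc : 0 < c := by nlinarith [norm_nonneg v]
  have hmix := convex_ballMomentSet.smul_add_sum_smul_mem (pair_mem_ballMomentSet hv.le)
    (w := fun i => w i / c) (z := fun i => (v, vecMulVec v v + c • vecMulVec (u i) (u i)))
    (fun i hi => div_nonneg (hw₀ i hi) hc.le)
    (by rwa [← Finset.sum_div, div_le_one hc])
    (fun i hi => mem_ballMomentSet_of_norm_lt_one hv (hu i hi))
  convert hmix using 1
  refine Prod.ext ?_ ?_
  · simp only [Prod.smul_mk, Prod.fst_add, Prod.fst_sum, ← Finset.sum_smul, ← add_smul,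
      sub_add_cancel, one_smul]
  · simp only [Prod.smul_mk, Prod.snd_add, Prod.snd_sum, smul_add, Finset.sum_add_distrib,
      ← Finset.sum_smul, smul_smul, div_mul_cancel₀ _ hc.ne']
    module

theorem mem_ballMomentSet_of_posSemidef {v : EuclideanSpace ℝ ι} {Q : Matrix ι ι ℝ}
    (hQv : (Q - vecMulVec v v).PosSemidef) (hQ : Q.trace ≤ 1) : (v, Q) ∈ ballMomentSet ι := by
  classical
  have htr : (Q - vecMulVec v v).trace = Q.trace - ‖v‖ ^ 2 := by
    rw [trace_sub, trace_vecMulVec, EuclideanSpace.real_norm_sq_eq]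
    simp [dotProduct, sq]
  have hv : ‖v‖ ≤ 1 :=
    (pow_le_one_iff_of_nonneg (norm_nonneg v) two_ne_zero).mp (by linarith [hQv.trace_nonneg])
  rcases hv.lt_or_eq with hv | hv
  · have hR : (Q - vecMulVec v v).IsHermitian := hQv.1
    have hdecomp : Q = vecMulVec v v + ∑ i, hR.eigenvalues i •
        vecMulVec (hR.eigenvectorBasis i) (hR.eigenvectorBasis i) := by
      rw [← sub_eq_iff_eq_add']
      simpa using hR.eq_sum_eigenvalues_smul_vecMulVec
    have hsum : ∑ i, hR.eigenvalues i ≤ 1 - ‖v‖ ^ 2 := by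
      have := hR.trace_eq_sum_eigenvalues
      simp only [RCLike.ofReal_real_eq_id, id] at this
      linarith
    have := mem_ballMomentSet_vecMulVec_add_sum hv (fun i _ => hQv.eigenvalues_nonneg i) hsum
      (fun i _ => hR.eigenvectorBasis.norm_eq_one i)
    rwa [← hdecomp] at this
  · have hQv₀ : Q - vecMulVec v v = 0 :=
      hQv.trace_eq_zero_iff.mp (by nlinarith [hQv.trace_nonneg])
    rw [sub_eq_zero.mp hQv₀]
    exact pair_mem_ballMomentSet hv.le

theorem ballMomentSet_eq : ballMomentSet ι = {p | p.2.PosSemidef ∧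
    (p.2 - vecMulVec p.1 p.1).PosSemidef ∧ p.2.trace ≤ 1} := by
  ext ⟨v, Q⟩
  refine ⟨?_, fun ⟨_, hQv, hQ⟩ => mem_ballMomentSet_of_posSemidef hQv hQ⟩
  rintro ⟨μ, hμ, hμ₁, rfl, rfl⟩
  have hQv := posSemidef_secondMoment_sub_vecMulVec hμ₁
  have hQ := hQv.add
    (posSemidef_vecMulVec_self_star (WithLp.ofLp (∫ y, y ∂μ : EuclideanSpace ℝ ι)))
  rw [star_trivial, sub_add_cancel] at hQ
  exact ⟨hQ, hQv, trace_secondMoment_le_one hμ₁⟩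

end UnitBallMoments

theorem stmt_12_general {d : ℕ} :
    {p : EuclideanSpace ℝ (Fin d) × Matrix (Fin d) (Fin d) ℝ |
      ∃ μ : Measure (EuclideanSpace ℝ (Fin d)), IsProbabilityMeasure μ ∧
        μ {y : EuclideanSpace ℝ (Fin d) | ‖y‖ ≤ 1}ᶜ = 0 ∧
        p.1 = (∫ y, y ∂μ) ∧
        p.2 = Matrix.of fun i j => ∫ y, y i * y j ∂μ} =
    {p : EuclideanSpace ℝ (Fin d) × Matrix (Fin d) (Fin d) ℝ |
      p.2.PosSemidef ∧ (p.2 - Matrix.vecMulVec p.1 p.1).PosSemidef ∧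
      p.2.trace ≤ 1} :=
  UnitBallMoments.ballMomentSet_eq

/-- Equation (S), S-Lemma characterization of the moment set of
the unit ball: the set of pairs of first and second moments of Borel
probability measures on the closed unit ball of `ℝ^d` equals
`{(v,Q) : Q ⪰ 0, Q − vvᵀ ⪰ 0, Tr Q ≤ 1}`. -/
theorem stmt_12 {d : ℕ} (hd : 1 ≤ d) :
    {p : EuclideanSpace ℝ (Fin d) × Matrix (Fin d) (Fin d) ℝ |
      ∃ μ : Measure (EuclideanSpace ℝ (Fin d)), IsProbabilityMeasure μ ∧
        μ {y : EuclideanSpace ℝ (Fin d) | ‖y‖ ≤ 1}ᶜ = 0 ∧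
        p.1 = (∫ y, y ∂μ) ∧
        p.2 = Matrix.of fun i j => ∫ y, y i * y j ∂μ} =
    {p : EuclideanSpace ℝ (Fin d) × Matrix (Fin d) (Fin d) ℝ |
      p.2.PosSemidef ∧ (p.2 - Matrix.vecMulVec p.1 p.1).PosSemidef ∧
      p.2.trace ≤ 1} :=
  stmt_12_general
end
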